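/- arXiv:1703.03158 — 11 statements merged into one kernel-verified Lean document; each statement's English description precedes it below -/
import Mathlib

section
/- Let q = 5^k with k even and μ_{q+1} = {x ∈ F_{q^2} : x^{q+1} = 1}. For any a ∈ μ_{q+1} with a^4 ≠ -2, the element b = 2a(a^4 - 2)/(a^4 + 2) also lies in μ_{q+1}. -/
/-!
Since `x ↦ x ^ q` is the `k`-th iterate of Frobenius and sends `a` to `a⁻¹`, it sends `b` to
`2a⁻¹(a⁻⁴ - 2)/(a⁻⁴ + 2) = 2a⁻¹(1 - 2a⁴)/(1 + 2a⁴)`, so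
`b ^ (q + 1) = 4(a⁴ - 2)(1 - 2a⁴) / ((a⁴ + 2)(1 + 2a⁴))`, and numerator and denominator both
equal `2a⁸ + 2` in characteristic `5`. Neither denominator vanishes: `1 + 2a⁴ = 2(a⁴ - 2)`, and
`a⁴ = ±2` is impossible because `±2` is fixed by Frobenius, so `(±2) ^ (q + 1) = 4 ≠ 1`.
-/

section ExpChar

variable {K : Type*} [Field K] {p : ℕ} [ExpChar K p] {k : ℕ}

theorem intCast_sq_eq_one_of_pow_expChar_pow_add_one_eq_one {n : ℤ}
    (hn : (n : K) ^ (p ^ k + 1) = 1) : (n : K) ^ 2 = 1 := by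
  rwa [pow_succ, ← iterateFrobenius_def, map_intCast, ← sq] at hn

theorem iterateFrobenius_eq_inv_of_pow_expChar_pow_add_one_eq_one {a : K}
    (ha : a ^ (p ^ k + 1) = 1) : iterateFrobenius K p k a = a⁻¹ := by
  rw [iterateFrobenius_def]
  exact eq_inv_of_mul_eq_one_left (by rw [← pow_succ, ha])

end ExpChar

instance Nat.fact_prime_five : Fact (Nat.Prime 5) := ⟨Nat.prime_five⟩

section CharFive

variable {K : Type*} [Field K] [CharP K 5] {k : ℕ} {a : K}

theorem four_ne_one_of_charP_five : (4 : K) ≠ 1 := by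
  intro h
  have h3 : ((3 : ℕ) : K) = 0 := by push_cast; linear_combination h
  rw [CharP.cast_eq_zero_iff K 5] at h3
  norm_num at h3

theorem pow_four_ne_intCast_of_sq_eq_four (ha : a ^ (5 ^ k + 1) = 1) {c : ℤ}
    (hc : (c : K) ^ 2 = 4) : a ^ 4 ≠ c := by
  intro h
  have hc1 : (c : K) ^ (5 ^ k + 1) = 1 := by
    rw [← h, ← pow_mul, mul_comm, pow_mul, ha, one_pow]
  apply four_ne_one_of_charP_five (K := K)
  rw [← hc, intCast_sq_eq_one_of_pow_expChar_pow_add_one_eq_one hc1]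

theorem pow_four_ne_two (ha : a ^ (5 ^ k + 1) = 1) : a ^ 4 ≠ 2 := by
  simpa using pow_four_ne_intCast_of_sq_eq_four ha (c := 2) (by norm_num)

theorem pow_four_ne_neg_two (ha : a ^ (5 ^ k + 1) = 1) : a ^ 4 ≠ -2 := by
  simpa using pow_four_ne_intCast_of_sq_eq_four ha (c := -2) (by norm_num)

theorem rational_map_pow_five_pow_add_one_eq_one (ha : a ^ (5 ^ k + 1) = 1) :
    (2 * a * (a ^ 4 - 2) / (a ^ 4 + 2)) ^ (5 ^ k + 1) = 1 := by
  have ha0 : a ≠ 0 := by rintro rfl; simp at ha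
  have h5 : (5 : K) = 0 := by exact_mod_cast CharP.cast_eq_zero K 5
  have hden : a ^ 4 + 2 ≠ 0 := fun h => pow_four_ne_neg_two ha (by linear_combination h)
  have hden' : 1 + 2 * a ^ 4 ≠ 0 :=
    fun h => pow_four_ne_two ha (by linear_combination 3 * h - (a ^ 4 + 1) * h5)
  rw [pow_succ, ← iterateFrobenius_def (p := 5)]
  simp only [map_div₀, map_mul, map_sub, map_add, map_pow, map_ofNat,
    iterateFrobenius_eq_inv_of_pow_expChar_pow_add_one_eq_one ha]
  field_simp
  linear_combination (3 * a ^ 4 - 2 - 2 * a ^ 8) * h5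

end CharFive

theorem b_mem_mu_general (k : ℕ)
    (E : Type*) [Field E] [Fintype E] (hE : Fintype.card E = (5 ^ k) ^ 2)
    (a : E) (ha : a ^ (5 ^ k + 1) = 1) :
    (2 * a * (a ^ 4 - 2) / (a ^ 4 + 2)) ^ (5 ^ k + 1) = 1 := by
  have : CharP E 5 := charP_of_card_eq_prime_pow (hE.trans (pow_mul 5 k 2).symm)
  exact rational_map_pow_five_pow_add_one_eq_one ha

theorem b_mem_mu (k : ℕ) (hk : Even k) (hk0 : 0 < k)
    (E : Type*) [Field E] [Fintype E] (hE : Fintype.card E = (5 ^ k) ^ 2)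
    (a : E) (ha : a ^ (5 ^ k + 1) = 1) (ha4 : a ^ 4 ≠ -2) :
    (2 * a * (a ^ 4 - 2) / (a ^ 4 + 2)) ^ (5 ^ k + 1) = 1 :=
  b_mem_mu_general k E hE a ha
end

section
/- Let q = 5^k with k even and μ_{q+1} = {x ∈ F_{q^2} : x^{q+1} = 1}. Then for every x ∈ μ_{q+1}, x^4 + 2 ≠ 0. -/
lemma neg_two_pow_five_pow (E : Type*) [Field E] (h5 : (5 : E) = 0) (k : ℕ) :
    (-2 : E) ^ (5 ^ k) = -2 := by
  induction k with
  | zero => simp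
  | succ n ih =>
    rw [pow_succ, pow_mul, ih]
    linear_combination (-6 : E) * h5

theorem x_pow_four_add_two_ne_zero (k : ℕ) (hk : Even k) (hk0 : 0 < k)
    (E : Type*) [Field E] [Fintype E] (hE : Fintype.card E = (5 ^ k) ^ 2)
    (x : E) (hx : x ^ (5 ^ k + 1) = 1) :
    x ^ 4 + 2 ≠ 0 := by
  -- Characteristic of E is 5
  set p := ringChar E with hp
  haveI : CharP E p := ringChar.charP E
  obtain ⟨n, hpprime, hcard⟩ := FiniteField.card E p
  have hp5 : p = 5 := by
    have hdvd : p ∣ 5 ^ (k * 2) := by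
      rw [← pow_mul] at hE
      rw [← hE, hcard]
      exact dvd_pow_self p n.pos.ne'
    have := hpprime.dvd_of_dvd_pow hdvd
    exact (Nat.prime_dvd_prime_iff_eq hpprime (by norm_num)).mp this
  have h5 : (5 : E) = 0 := by
    have := CharP.cast_eq_zero E p
    rwa [hp5] at this
  intro h
  have hx4 : x ^ 4 = -2 := by linear_combination h
  have h1 : ((-2 : E)) ^ (5 ^ k + 1) = 1 := by
    rw [← hx4, ← pow_mul, mul_comm, pow_mul, hx, one_pow]
  rw [pow_succ, neg_two_pow_five_pow E h5 k] at h1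
  -- h1 : (-2) * (-2) = 1, i.e. 4 = 1, so 3 = 0, contradiction with char 5
  have h3 : (3 : E) = 0 := by linear_combination h1
  have : (2 : E) = 0 := by linear_combination h5 - h3
  have h1' : (1 : E) = 0 := by linear_combination h3 - this
  exact one_ne_zero h1'
end

section
/- Let q = 5^k with k even and Ω₊ = {x^2 : x ∈ μ_{q+1}}, where μ_{q+1} = {x ∈ F_{q^2} : x^{q+1} = 1}. Then the system x·y = 1 and x + y = 1 has no solution with x, y ∈ Ω₊; likewise the system x·y = 1, x + y = -1 has no solution in Ω₊. -/
lemma key_no_sol (k : ℕ) (hk : Even k) (E : Type*) [Field E] (h5 : CharP E 5)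
    (x : E) (hx : x ^ (5 ^ k + 1) = 1) (s : E) (hs : s * s = 1)
    (hq : x * x - s * x + 1 = 0) : False := by
  obtain ⟨m, rfl⟩ := hk
  have hcube : x ^ 3 = -s := by linear_combination (x + s) * hq + x * hs
  have h6 : x ^ 6 = 1 := by
    calc x ^ 6 = (x ^ 3) ^ 2 := by ring
    _ = (-s) ^ 2 := by rw [hcube]
    _ = s * s := by ring
    _ = 1 := hs
  -- order divides gcd
  have hd1 : orderOf x ∣ 6 := orderOf_dvd_of_pow_eq_one h6
  have hd2 : orderOf x ∣ 5 ^ (m + m) + 1 := orderOf_dvd_of_pow_eq_one hx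
  have h3mod : 5 ^ (m + m) % 3 = 1 := by
    rw [show m + m = 2 * m by omega, pow_mul, Nat.pow_mod]
    norm_num
  have h2mod : 5 ^ (m + m) % 2 = 1 := by
    rw [Nat.pow_mod]; norm_num
  have hgcd : Nat.gcd 6 (5 ^ (m + m) + 1) = 2 := by
    have hd6 : Nat.gcd 6 (5 ^ (m + m) + 1) ∣ 6 := Nat.gcd_dvd_left _ _
    have h2d : 2 ∣ Nat.gcd 6 (5 ^ (m + m) + 1) :=
      Nat.dvd_gcd (by norm_num) (by omega)
    have h3d : ¬ 3 ∣ Nat.gcd 6 (5 ^ (m + m) + 1) := by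
      intro h
      have := h.trans (Nat.gcd_dvd_right 6 (5 ^ (m + m) + 1))
      omega
    have hle : Nat.gcd 6 (5 ^ (m + m) + 1) ≤ 6 := Nat.le_of_dvd (by norm_num) hd6
    interval_cases h : Nat.gcd 6 (5 ^ (m + m) + 1) <;> omega
  have hdvd2 : orderOf x ∣ 2 := hgcd ▸ Nat.dvd_gcd hd1 hd2
  have h2' : x ^ 2 = 1 := orderOf_dvd_iff_pow_eq_one.mp hdvd2
  have h2'' : x * x = 1 := by rw [← pow_two]; exact h2'
  have hsx : s * x = 2 := by linear_combination (-1 : E) * hq + h2''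
  have h30 : (3 : E) = 0 := by
    linear_combination (-(s * x + 2)) * hsx + x * x * hs + h2''
  have : (5 : ℕ) ∣ 3 := (CharP.cast_eq_zero_iff E 5 3).mp (by exact_mod_cast h30)
  omega

theorem no_solution_in_omega_plus (k : ℕ) (hk : Even k) (hk0 : 0 < k)
    (E : Type*) [Field E] [Fintype E] (hE : Fintype.card E = (5 ^ k) ^ 2) :
    let q := 5 ^ k
    let μ : Set E := {x | x ^ (q + 1) = 1}
    let Ωp : Set E := {y | ∃ x ∈ μ, y = x ^ 2}
    (¬ ∃ x ∈ Ωp, ∃ y ∈ Ωp, x * y = 1 ∧ x + y = 1) ∧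
    (¬ ∃ x ∈ Ωp, ∃ y ∈ Ωp, x * y = 1 ∧ x + y = -1) := by
  intro q μ Ωp
  -- characteristic is 5
  have h5 : CharP E 5 := by
    obtain ⟨p, hc⟩ := CharP.exists E
    haveI := hc
    obtain ⟨n, hp, hcard⟩ := FiniteField.card E p
    rw [hE, ← pow_mul] at hcard
    have hp5 : p = 5 := by
      have : p ∣ 5 ^ (k * 2) := hcard ▸ dvd_pow_self p n.pos.ne'
      have := (Nat.Prime.dvd_of_dvd_pow hp this)
      have h5p : Nat.Prime 5 := by norm_num
      exact ((Nat.prime_dvd_prime_iff_eq hp h5p).mp this)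
    rwa [hp5] at hc
  have hxq : ∀ x ∈ Ωp, x ^ (5 ^ k + 1) = 1 := by
    rintro x ⟨a, ha, rfl⟩
    calc (a ^ 2) ^ (5 ^ k + 1) = (a ^ (5 ^ k + 1)) ^ 2 := by
          rw [← pow_mul, ← pow_mul, mul_comm]
      _ = 1 := by rw [ha, one_pow]
  constructor
  · rintro ⟨x, hx, y, hy, hxy, hsum⟩
    refine key_no_sol k hk E h5 x (hxq x hx) 1 (by norm_num) ?_
    linear_combination x * hsum - hxy
  · rintro ⟨x, hx, y, hy, hxy, hsum⟩
    refine key_no_sol k hk E h5 x (hxq x hx) (-1) (by norm_num) ?_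
    linear_combination x * hsum - hxy
end

section
/- Let q = 5^k with k even and μ_{q+1} = {x ∈ F_{q^2} : x^{q+1} = 1}. The map g(x) = -x((x^2 - 2)/(x^2 + 2))^2 maps Ω₊ = {x^2 : x ∈ μ_{q+1}} into itself and maps Ω₋ = {-x^2 : x ∈ μ_{q+1}} into itself. -/
theorem g_maps_omega (k : ℕ) (hk : Even k) (hk0 : 0 < k)
    (E : Type*) [Field E] [Fintype E] (hE : Fintype.card E = (5 ^ k) ^ 2) :
    let q := 5 ^ k
    let μ : Set E := {x | x ^ (q + 1) = 1}
    let Ωp : Set E := {y | ∃ x ∈ μ, y = x ^ 2}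
    let Ωm : Set E := {y | ∃ x ∈ μ, y = -x ^ 2}
    let g : E → E := fun x => -x * ((x ^ 2 - 2) / (x ^ 2 + 2)) ^ 2
    (∀ x ∈ Ωp, g x ∈ Ωp) ∧ (∀ x ∈ Ωm, g x ∈ Ωm) := by
  intro q μ Ωp Ωm g
  -- characteristic is 5
  have hq5 : Nat.Prime 5 := by norm_num
  obtain ⟨p, hpchar⟩ := CharP.exists E
  haveI := hpchar
  have hpprime : p.Prime := CharP.char_is_prime E p
  obtain ⟨n, -, hn⟩ := FiniteField.card E p
  have hp5 : p = 5 := by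
    have hdvd : p ∣ 5 ^ (2 * k) := by
      rw [← pow_mul, mul_comm k 2] at hE
      rw [← hE, hn]
      exact dvd_pow_self p n.ne_zero
    have := hpprime.dvd_of_dvd_pow (n := 2 * k) (m := 5) hdvd
    exact (Nat.prime_dvd_prime_iff_eq hpprime hq5).mp this
  subst hp5
  haveI : Fact (Nat.Prime 5) := ⟨hq5⟩
  haveI : ExpChar E 5 := inferInstance
  have h5 : (5 : E) = 0 := CharP.cast_eq_zero E 5
  have h2ne : (2 : E) ≠ 0 := by
    intro h
    have : (1 : E) = 0 := by linear_combination h5 - 2 * h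
    exact one_ne_zero this
  have hne1 : (1 : E) ≠ -1 := by
    intro h
    exact h2ne (by linear_combination h)
  -- Frobenius
  set φ : E →+* E := iterateFrobenius E 5 k with hφdef
  have hφ : ∀ a : E, φ a = a ^ q := fun a => rfl
  -- key lemma
  have key : ∀ x : E, x ^ (q + 1) = 1 →
      ∃ z : E, z ^ (q + 1) = 1 ∧ z ^ 2 = -x ^ 2 * ((x ^ 4 - 2) / (x ^ 4 + 2)) ^ 2 := by
    intro x hx
    have hx0 : x ≠ 0 := by
      intro h
      rw [h, zero_pow (Nat.succ_ne_zero q)] at hx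
      exact one_ne_zero hx.symm
    have hxq : x ^ q * x = 1 := by rw [← pow_succ]; exact hx
    set a : E := x ^ 4 with ha_def
    have haμ : a ^ (q + 1) = 1 := by
      rw [ha_def, ← pow_mul, mul_comm 4 (q + 1), pow_mul, hx, one_pow]
    have haq : a ^ q * a = 1 := by rw [← pow_succ]; exact haμ
    have ha0 : a ≠ 0 := pow_ne_zero 4 hx0
    have hφ2 : φ (2 : E) = 2 := map_ofNat φ 2
    -- a ≠ -2
    have ha2 : a + 2 ≠ 0 := by
      intro h
      have ha : a = -2 := by linear_combination h
      rw [ha] at haq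
      have h2q : (-2 : E) ^ q = -2 := by rw [← hφ]; rw [map_neg, hφ2]
      rw [h2q] at haq
      have : (1 : E) = -1 := by linear_combination -haq + h5
      exact hne1 this
    -- a ≠ 2
    have ham2 : a - 2 ≠ 0 := by
      intro h
      have ha : a = 2 := by linear_combination h
      rw [ha] at haq
      have h2q : (2 : E) ^ q = 2 := by rw [← hφ]; exact hφ2
      rw [h2q] at haq
      have : (1 : E) = -1 := by linear_combination -haq + h5
      exact hne1 this
    have h2a1 : 1 + 2 * a ≠ 0 := by
      intro h
      apply ham2
      have h3 : (3 : E) ≠ 0 := by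
        intro h3z
        exact h2ne (by linear_combination h5 - h3z)
      apply mul_left_cancel₀ h3
      rw [mul_zero]
      linear_combination 4 * h + (-a - 2) * h5
    set w : E := (a - 2) / (a + 2) with hw_def
    set b : E := a ^ q with hb_def
    have hb : b * a = 1 := haq
    have hwq : w ^ q = (b - 2) / (b + 2) := by
      rw [← hφ, hw_def, map_div₀, map_sub, map_add, hφ2, hφ]
    have hb2 : b + 2 ≠ 0 := by
      intro h
      exact h2a1 (by linear_combination a * h - hb)
    have hww : w ^ q * w = -1 := by
      rw [hwq, hw_def, div_mul_div_comm, div_eq_iff (mul_ne_zero hb2 ha2)]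
      linear_combination 2 * hb + 2 * h5
    have h2q : (2 : E) ^ q = 2 := (hφ 2).symm.trans hφ2
    refine ⟨2 * x * w, ?_, ?_⟩
    · have hzq : (2 * x * w) ^ q = 2 * x ^ q * w ^ q := by
        rw [mul_pow, mul_pow, h2q]
      rw [pow_succ, hzq]
      have : 2 * x ^ q * w ^ q * (2 * x * w) = (2 * 2) * (x ^ q * x) * (w ^ q * w) := by
        ring
      rw [this, hxq, hww]
      linear_combination -h5
    · have : (2 * x * w) ^ 2 = 4 * (x ^ 2 * w ^ 2) := by ring
      rw [this]
      have h4 : (4 : E) = -1 := by linear_combination h5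
      rw [h4]
      ring
  constructor
  · rintro y ⟨x, hx, rfl⟩
    obtain ⟨z, hz, hz2⟩ := key x hx
    refine ⟨z, hz, ?_⟩
    show -x ^ 2 * (((x ^ 2) ^ 2 - 2) / ((x ^ 2) ^ 2 + 2)) ^ 2 = z ^ 2
    rw [hz2]
    norm_num [← pow_mul]
  · rintro y ⟨x, hx, rfl⟩
    obtain ⟨z, hz, hz2⟩ := key x hx
    refine ⟨z, hz, ?_⟩
    show -(-x ^ 2) * (((-x ^ 2) ^ 2 - 2) / ((-x ^ 2) ^ 2 + 2)) ^ 2 = -z ^ 2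
    rw [hz2]
    have : ((-x ^ 2) ^ 2 : E) = x ^ 4 := by ring
    rw [this]
    ring
end

section
/- Let q = 5^k where k is a positive even integer, and let μ_{q+1} = {x ∈ F_{q^2} : x^{q+1} = 1}. Then the map g(x) = -x((x^2 - 2)/(x^2 + 2))^2 is a bijection of μ_{q+1} onto itself. -/
namespace WuLiAux

variable {E : Type*} [Field E]

lemma two_ne (h5 : (5:E) = 0) : (2:E) ≠ 0 := by
  intro h
  have h1 : (1:E) = 0 := by linear_combination h5 - 2*h
  exact one_ne_zero h1

lemma three_ne (h5 : (5:E) = 0) : (3:E) ≠ 0 := by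
  intro h
  have h1 : (1:E) = 0 := by linear_combination 2*h - h5
  exact one_ne_zero h1

lemma mu_ne_zero {q : ℕ} {x : E} (hx : x ^ (q+1) = 1) : x ≠ 0 := by
  intro h
  rw [h, zero_pow (Nat.succ_ne_zero q)] at hx
  exact zero_ne_one hx

lemma mu_sq_ne {q c : ℕ} (hqc : q = 24*c+1) {x : E} (hx : x ^ (q+1) = 1)
    {d : E} (hd4 : d^4 = 1) (hd1 : d ≠ 1) : x^2 ≠ d := by
  intro h2
  have hm : q + 1 = 2*(12*c+1) := by omega
  have h1 : (x^2)^(12*c+1) = 1 := by rw [← pow_mul, ← hm, hx]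
  rw [h2] at h1
  have hd : d^(12*c+1) = d := by
    rw [show 12*c+1 = 4*(3*c)+1 from by ring, pow_succ, pow_mul, hd4, one_pow, one_mul]
  exact hd1 (by rw [← hd, h1])

lemma c2four (h5 : (5:E) = 0) : (2:E)^4 = 1 := by linear_combination 3*h5
lemma c3four (h5 : (5:E) = 0) : (3:E)^4 = 1 := by linear_combination 16*h5
lemma c2ne1 (h5 : (5:E) = 0) : (2:E) ≠ 1 := by
  intro h; exact one_ne_zero (show (1:E) = 0 by linear_combination h)
lemma c3ne1 (h5 : (5:E) = 0) : (3:E) ≠ 1 := by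
  intro h; exact two_ne h5 (show (2:E) = 0 by linear_combination h)

lemma mu_den_ne {q c : ℕ} (hqc : q = 24*c+1) (h5 : (5:E) = 0) {x : E}
    (hx : x ^ (q+1) = 1) : x^2 + 2 ≠ 0 ∧ x^2 - 2 ≠ 0 := by
  constructor
  · intro h
    exact mu_sq_ne hqc hx (c3four h5) (c3ne1 h5) (by linear_combination h - h5)
  · intro h
    exact mu_sq_ne hqc hx (c2four h5) (c2ne1 h5) (by linear_combination h)

lemma cpow {q c : ℕ} (hqc : q = 24*c+1) (d : E) (hd4 : d^4 = 1) : d^q = d := by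
  rw [hqc, show 24*c+1 = 4*(6*c)+1 from by ring, pow_succ, pow_mul, hd4, one_pow, one_mul]

/-- membership is preserved -/
lemma maps_to {q c : ℕ} (hqc : q = 24*c+1) (h5 : (5:E) = 0)
    (frob : ∀ a b : E, (a+b)^q = a^q + b^q)
    (frobs : ∀ a b : E, (a-b)^q = a^q - b^q)
    {x : E} (hx : x ^ (q+1) = 1) :
    (-x * ((x^2-2)/(x^2+2))^2) ^ (q+1) = 1 := by
  obtain ⟨hdx2, -⟩ := mu_den_ne hqc h5 hx
  have hX : (x^q) ^ (q+1) = 1 := by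
    rw [← pow_mul, mul_comm, pow_mul, hx, one_pow]
  obtain ⟨hdX2, -⟩ := mu_den_ne hqc h5 hX
  have h1 : x^q * x = 1 := by rw [← pow_succ]; exact hx
  have hAq : ((x^2-2)/(x^2+2))^q = ((x^q)^2-2)/((x^q)^2+2) := by
    rw [div_pow, frobs (x^2) 2, frob (x^2) 2, cpow hqc 2 (c2four h5),
      ← pow_mul, mul_comm 2 q, pow_mul]
  have hA : ((x^2-2)/(x^2+2))^q * ((x^2-2)/(x^2+2)) = -1 := by
    rw [hAq, div_mul_div_comm, div_eq_iff (mul_ne_zero hdX2 hdx2)]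
    linear_combination 2*(x^q*x+1)*h1 + 2*h5
  have heven : Even (q+1) := ⟨12*c+1, by omega⟩
  calc (-x * ((x^2-2)/(x^2+2))^2) ^ (q+1)
      = (-x)^(q+1) * ((((x^2-2)/(x^2+2))^2)^(q+1)) := mul_pow _ _ _
    _ = x^(q+1) * ((((x^2-2)/(x^2+2))^(q+1))^2) := by
        rw [heven.neg_pow, pow_right_comm]
    _ = 1 := by
        rw [hx, one_mul, pow_succ ((x^2-2)/(x^2+2)) q, hA]
        norm_num

/-- the injectivity core -/
lemma inj_core {q c : ℕ} (hqc : q = 24*c+1) (h5 : (5:E) = 0)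
    (frob : ∀ a b : E, (a+b)^q = a^q + b^q)
    (frobs : ∀ a b : E, (a-b)^q = a^q - b^q)
    {x y : E} (hx : x ^ (q+1) = 1) (hy : y ^ (q+1) = 1)
    (hg : -x * ((x^2-2)/(x^2+2))^2 = -y * ((y^2-2)/(y^2+2))^2) : x = y := by
  by_cases hne : x = y
  · exact hne
  exfalso
  have hx0 : x ≠ 0 := mu_ne_zero hx
  have hy0 : y ≠ 0 := mu_ne_zero hy
  obtain ⟨hdx2, hdx2'⟩ := mu_den_ne hqc h5 hx
  obtain ⟨hdy2, hdy2'⟩ := mu_den_ne hqc h5 hy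
  have hgx : -x * ((x^2-2)/(x^2+2))^2 = (-x*(x^2-2)^2)/((x^2+2)^2) := by
    rw [div_pow]; ring
  have hgy : -y * ((y^2-2)/(y^2+2))^2 = (-y*(y^2-2)^2)/((y^2+2)^2) := by
    rw [div_pow]; ring
  -- case y = -x
  by_cases hyx : y = -x
  · rw [hyx] at hg
    rw [show ((-x)^2 : E) = x^2 from by ring, neg_neg] at hg
    have hgg : (2:E) * (x * ((x^2-2)/(x^2+2))^2) = 0 := by
      linear_combination (-1) * hg
    have h1 : x * ((x^2-2)/(x^2+2))^2 = 0 := by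
      rcases mul_eq_zero.mp hgg with h | h
      · exact absurd h (two_ne h5)
      · exact h
    rcases mul_eq_zero.mp h1 with h | h
    · exact hx0 h
    · have h2 := sq_eq_zero_iff.mp h
      rcases div_eq_zero_iff.mp h2 with h' | h'
      · exact hdx2' h'
      · exact hdx2 h'
  -- case x*y = 1
  by_cases ht1 : x*y = 1
  · have hAy : (y^2-2)/(y^2+2) * ((x^2-2)/(x^2+2)) = -1 := by
      rw [div_mul_div_comm, div_eq_iff (mul_ne_zero hdy2 hdx2)]
      linear_combination 2*(x*y+1)*ht1 + 2*h5
    have hgg : (-x * ((x^2-2)/(x^2+2))^2) * (-y * ((y^2-2)/(y^2+2))^2) = 1 := by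
      have hre : (-x * ((x^2-2)/(x^2+2))^2) * (-y * ((y^2-2)/(y^2+2))^2)
          = (x*y) * ((y^2-2)/(y^2+2) * ((x^2-2)/(x^2+2)))^2 := by ring
      rw [hre, hAy, ht1]; norm_num
    rw [hg] at hgg
    have hsq : (-y * ((y^2-2)/(y^2+2))^2 - 1) * (-y * ((y^2-2)/(y^2+2))^2 + 1) = 0 := by
      linear_combination hgg
    have hy2ne1 : y^2 ≠ 1 := by
      intro h
      have hxy2 : x = y := by
        calc x = x * y^2 := by rw [h, mul_one]
          _ = (x*y)*y := by ring
          _ = y := by rw [ht1, one_mul]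
      exact hne hxy2
    rcases mul_eq_zero.mp hsq with h | h
    · -- g y = 1
      have h1 : (-y*(y^2-2)^2)/((y^2+2)^2) = 1 := by
        rw [← hgy]; linear_combination h
      have hcl := (div_eq_iff (pow_ne_zero 2 hdy2)).mp h1
      have hfac : (y-1)*(y^2+y+1)^2 = 0 := by
        linear_combination (-1)*hcl + (y^3-y^2-y-1)*h5
      rcases mul_eq_zero.mp hfac with h' | h'
      · have hy1 : y = 1 := by linear_combination h'
        exact hy2ne1 (by rw [hy1]; norm_num)
      · have hq2 : y^2+y+1 = 0 := sq_eq_zero_iff.mp h'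
        have hcube : y^3 = 1 := by linear_combination (y-1)*hq2
        have h3 : y^(q+1) = y^2 := by
          rw [show q+1 = 3*(8*c)+2 from by omega, pow_add, pow_mul, hcube, one_pow, one_mul]
        rw [hy] at h3
        exact hy2ne1 h3.symm
    · -- g y = -1
      have h1 : (-y*(y^2-2)^2)/((y^2+2)^2) = -1 := by
        rw [← hgy]; linear_combination h
      have hcl := (div_eq_iff (pow_ne_zero 2 hdy2)).mp h1
      have hfac : (y+1)*(y^2-y+1)^2 = 0 := by
        linear_combination (-1)*hcl + (y^3+y^2-y+1)*h5
      rcases mul_eq_zero.mp hfac with h' | h'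
      · have hy1 : y = -1 := by linear_combination h'
        exact hy2ne1 (by rw [hy1]; norm_num)
      · have hq2 : y^2-y+1 = 0 := sq_eq_zero_iff.mp h'
        have hcube : y^3 = -1 := by linear_combination (y+1)*hq2
        have h6 : y^6 = 1 := by
          have h62 : y^6 = (y^3)^2 := by ring
          rw [h62, hcube]; norm_num
        have h3 : y^(q+1) = y^2 := by
          rw [show q+1 = 6*(4*c)+2 from by omega, pow_add, pow_mul, h6, one_pow, one_mul]
        rw [hy] at h3
        exact hy2ne1 h3.symm
  -- main case
  rw [hgx, hgy] at hg
  have hg2 := (div_eq_div_iff (pow_ne_zero 2 hdx2) (pow_ne_zero 2 hdy2)).mp hg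
  have hQ0 : (x-y) * (x^4*y^4 + 4*x^4*y^2 + 3*x^3*y^3 + 4*x^2*y^4 + 4*x^4
      + 4*x^2*y^2 + 4*y^4 + 4*x^2 + 3*x*y + 4*y^2 + 1) = 0 := by
    linear_combination (-1)*hg2 + (-(x^4*y^3) + x^3*y^4 + 4*x^3*y^2 + 4*x^3
      - 4*x^2*y^3 + 3*x^2*y - 3*x*y^2 - 3*x - 4*y^3 + 3*y) * h5
  have hQ : x^4*y^4 + 4*x^4*y^2 + 3*x^3*y^3 + 4*x^2*y^4 + 4*x^4
      + 4*x^2*y^2 + 4*y^4 + 4*x^2 + 3*x*y + 4*y^2 + 1 = 0 := by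
    rcases mul_eq_zero.mp hQ0 with h | h
    · exact absurd h (sub_ne_zero.mpr hne)
    · exact h
  obtain ⟨X, hXd⟩ : ∃ X:E, X = x^q := ⟨_, rfl⟩
  obtain ⟨Y, hYd⟩ : ∃ Y:E, Y = y^q := ⟨_, rfl⟩
  have h1 : X*x = 1 := by rw [hXd, ← pow_succ]; exact hx
  have h2 : Y*y = 1 := by rw [hYd, ← pow_succ]; exact hy
  obtain ⟨t, htd⟩ : ∃ t:E, t = x*y := ⟨_, rfl⟩
  have ht0 : t ≠ 0 := by rw [htd]; exact mul_ne_zero hx0 hy0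
  obtain ⟨T, hTd⟩ : ∃ T:E, T = t^q := ⟨_, rfl⟩
  have hT1 : T*t = 1 := by
    have hmu : (x*y)^(q+1) = 1 := by rw [mul_pow, hx, hy, one_mul]
    rw [hTd, htd, ← pow_succ]
    exact hmu
  have ht1' : t ≠ 1 := by rw [htd]; exact ht1
  have htm1 : t - 1 ≠ 0 := sub_ne_zero.mpr ht1'
  have hTm1 : T - 1 ≠ 0 := by
    intro h
    have hT : T = 1 := by linear_combination h
    rw [hT, one_mul] at hT1
    exact ht1' hT1
  obtain ⟨e, hed⟩ : ∃ e:E, e = x+y := ⟨_, rfl⟩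
  obtain ⟨f, hfd⟩ : ∃ f:E, f = e^q := ⟨_, rfl⟩
  have hfXY : f = X+Y := by rw [hfd, hed, frob x y, hXd, hYd]
  obtain ⟨s, hsd⟩ : ∃ s:E, s = e^2 := ⟨_, rfl⟩
  obtain ⟨v, hvd⟩ : ∃ v:E, v = 2*s + t^2 + t + 1 := ⟨_, rfl⟩
  have hsqq : (e^2)^q = f^2 := by rw [← pow_mul, mul_comm 2 q, pow_mul, ← hfd]
  have htqq : (t^2)^q = T^2 := by rw [← pow_mul, mul_comm 2 q, pow_mul, ← hTd]
  have hvq : v^q = 2*f^2 + T^2 + T + 1 := by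
    rw [hvd, hsd]
    rw [frob (2*e^2 + t^2 + t) 1, frob (2*e^2 + t^2) t, frob (2*e^2) (t^2),
      mul_pow, cpow hqc 2 (c2four h5), hsqq, htqq, ← hTd, one_pow]
  have hQst : s^2 + (t^2+t+1)*s - (t^2+1)^2 = 0 := by
    linear_combination (t^2 + t + e^2 + s + 1) * hsd
      + (x^3 + 3*x^2*y + x^2*e + 3*x*y^2 + 2*x*y*e + x*t^2 + x*t + x*e^2 + x + y^3
        + y^2*e + y*t^2 + y*t + y*e^2 + y + t^2*e + t*e + e^3 + e) * hed
      + (-(x^3*y^3) + x^3*y - x^2*y^2*t + 2*x^2*y^2 + x^2*t + x^2 + x*y^3 - x*y*t^2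
        + 2*x*y*t + y^2*t + y^2 - t^3 - 2*t) * htd
      + (-1) * hQ
      + (x^4*y^2 + x^4 + x^3*y^3 + x^3*y + x^2*y^4 + 2*x^2*y^2 + x^2 + x*y^3
        + x*y + y^4 + y^2) * h5
  have hv2 : v^2 = 2*t*(t-1)^2 := by
    linear_combination 4*hQst + (t^2 + t + 2*s + v + 1)*hvd + (t^4 + 3*t^2 + 1)*h5
  obtain ⟨r, hrd⟩ : ∃ r:E, r = v/(t-1) := ⟨_, rfl⟩
  have hr : r*(t-1) = v := by rw [hrd, div_mul_cancel₀ _ htm1]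
  have hr2 : r^2 = 2*t := by
    have h : (r^2 - 2*t)*(t-1)^2 = 0 := by
      linear_combination (t*r + v - r)*hr + hv2
    rcases mul_eq_zero.mp h with h' | h'
    · linear_combination h'
    · exact absurd h' (pow_ne_zero 2 htm1)
  have hr0 : r ≠ 0 := by
    intro h
    have h2t : (2:E)*t = 0 := by rw [← hr2, h]; ring
    rcases mul_eq_zero.mp h2t with h' | h'
    · exact two_ne h5 h'
    · exact ht0 h'
  obtain ⟨R, hRd⟩ : ∃ R:E, R = r^q := ⟨_, rfl⟩
  have hrq : r^q = v^q/(T-1) := by rw [hrd, div_pow, frobs t 1, one_pow, ← hTd]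
  have hR : R*(T-1) = 2*f^2+T^2+T+1 := by
    rw [hRd, hrq, div_mul_cancel₀ _ hTm1, hvq]
  have hfe : f*t = e := by
    linear_combination t*hfXY + (X+Y)*htd + y*h1 + x*h2 - hed
  have hVt : (2*f^2+T^2+T+1)*t^2 = v := by
    linear_combination (-1)*hvd - 2*hsd + (2*t*f+2*e)*hfe + (t*T+1)*hT1 + t*hT1
  have hRt : R*t = -r := by
    have h : (R*t+r)*(t-1) = 0 := by
      linear_combination (-(t^2))*hR - hVt + t*R*hT1 + hr
    rcases mul_eq_zero.mp h with h' | h'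
    · linear_combination h'
    · exact absurd h' htm1
  have hRr : R*r = 3 := by
    have h : (R*r - 3)*t = 0 := by linear_combination r*hRt - hr2 - t*h5
    rcases mul_eq_zero.mp h with h' | h'
    · linear_combination h'
    · exact absurd h' ht0
  have hR0 : R ≠ 0 := by
    intro h
    rw [h, zero_mul] at hRr
    exact three_ne h5 hRr.symm
  obtain ⟨b, hbd⟩ : ∃ b:E, b = (r+1)*(r+3)/r := ⟨_, rfl⟩
  have hb : b*r = (r+1)*(r+3) := by rw [hbd, div_mul_cancel₀ _ hr0]
  obtain ⟨B, hBd⟩ : ∃ B:E, B = b^q := ⟨_, rfl⟩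
  have hBq : B*R = (R+1)*(R+3) := by
    rw [hBd, hbd, div_pow, mul_pow, frob r 1, frob r 3, one_pow,
      cpow hqc 3 (c3four h5), ← hRd, div_mul_cancel₀ _ hR0]
  have hBb : B = b := by
    have h : (B-b)*(3*r) = 0 := by
      linear_combination r^2*hBq - 3*hb + (r*R - r*B + 4*r + 3)*hRr
    rcases mul_eq_zero.mp h with h' | h'
    · linear_combination h'
    · rcases mul_eq_zero.mp h' with h'' | h''
      · exact absurd h'' (three_ne h5)
      · exact absurd h'' hr0
  have hs2 : 2*s = 6*r^2*b^2 := by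
    linear_combination (-1)*hvd - hr + (-(6*r^2) - 6*r*b - 24*r - 18)*hb
      + (3*t + 9*r^2 - 3*r + 3)*hr2
      + (t^2 + 3*t*r^2 - t*r + t - 3*r^4 - 9*r^3 - 27*r^2 - 29*r - 11)*h5
  have hs3 : s = 3*(r*b)^2 := by
    linear_combination 3*hs2 - (s - 3*r^2*b^2)*h5
  have hqp1 : q + 1 = 2*(12*c+1) := by omega
  have h3p : (3:E)^(12*c+1) = 3 := by
    rw [show 12*c+1 = 4*(3*c)+1 from by ring, pow_succ, pow_mul, c3four h5, one_pow, one_mul]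
  have hrbp : ((r*b)^2)^(12*c+1) = R*B*(r*b) := by
    rw [← pow_mul, show 2*(12*c+1) = q+1 from by omega, pow_succ, mul_pow, ← hRd, ← hBd]
  have hE1 : e^(q+1) = 3*(R*B*(r*b)) := by
    rw [hqp1, pow_mul, ← hsd, hs3, mul_pow, h3p, hrbp]
  have hE2 : e^(q+1)*t = s := by
    rw [pow_succ, ← hfd]
    linear_combination e*hfe + (-1)*hsd
  have hkey : s = 3*(R*B*(r*b))*t := by rw [← hE2, hE1]
  have hfin : (3:E)*b^2*t = 0 := by
    linear_combination hs3 - hkey + (-(3*t*r*b*R))*hBb + (-(3*t*b^2))*hRr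
      + 18*b^2*hr2 + (6*t*b^2 - 3*r^2*b^2)*h5
  have hb0 : b = 0 := by
    rcases mul_eq_zero.mp hfin with h' | h'
    · rcases mul_eq_zero.mp h' with h'' | h''
      · exact absurd h'' (three_ne h5)
      · exact sq_eq_zero_iff.mp h''
    · exact absurd h' ht0
  have hs0 : s = 0 := by rw [hs3, hb0]; ring
  have he0 : e = 0 := by
    have h : e^2 = 0 := by rw [← hsd, hs0]
    exact sq_eq_zero_iff.mp h
  apply hyx
  have hxy0 : x + y = 0 := by rw [← hed, he0]
  linear_combination hxy0

end WuLiAux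

theorem g_bijOn_mu (k : ℕ) (hk : Even k) (hk0 : 0 < k)
    (E : Type*) [Field E] [Fintype E] (hE : Fintype.card E = (5 ^ k) ^ 2) :
    let q := 5 ^ k
    let μ : Set E := {x | x ^ (q + 1) = 1}
    let g : E → E := fun x => -x * ((x ^ 2 - 2) / (x ^ 2 + 2)) ^ 2
    Set.BijOn g μ μ := by
  intro q μ g
  haveI : Fact (Nat.Prime 5) := ⟨by norm_num⟩
  have hchar5 : ringChar E = 5 := by
    have hprime := CharP.char_is_prime E (ringChar E)
    obtain ⟨n, -, hcard⟩ := FiniteField.card E (ringChar E)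
    rw [hE] at hcard
    have h1 : ringChar E ∣ 5^(k*2) := by
      rw [← pow_mul] at hcard
      rw [hcard]
      exact dvd_pow_self _ n.pos.ne'
    have h2 : ringChar E ∣ 5 := hprime.dvd_of_dvd_pow h1
    exact (Nat.prime_dvd_prime_iff_eq hprime (by norm_num)).mp h2
  haveI hCE : CharP E 5 := hchar5 ▸ ringChar.charP E
  have h5 : (5:E) = 0 := CharP.cast_eq_zero E 5
  have frob : ∀ a b : E, (a+b)^q = a^q + b^q := fun a b => add_pow_char_pow a b 5 k
  have frobs : ∀ a b : E, (a-b)^q = a^q - b^q := fun a b => sub_pow_char_pow a b k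
  obtain ⟨j, hj⟩ := hk
  have hq25 : q = 25^j := by
    show 5^k = 25^j
    rw [hj, show (25:ℕ) = 5^2 from rfl, ← pow_mul, two_mul]
  have hmod : q % 24 = 1 := by
    rw [hq25, Nat.pow_mod]
    norm_num
  obtain ⟨c, hqc⟩ : ∃ c, q = 24*c+1 := ⟨q/24, by have := Nat.div_add_mod q 24; omega⟩
  have hmaps : Set.MapsTo g μ μ := by
    intro x hxμ
    have hx' : x ^ (q+1) = 1 := hxμ
    show (-x * ((x^2-2)/(x^2+2))^2) ^ (q+1) = 1
    exact WuLiAux.maps_to hqc h5 frob frobs hx'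
  have hinj : Set.InjOn g μ := by
    intro x hxμ y hyμ hxy
    have hx' : x ^ (q+1) = 1 := hxμ
    have hy' : y ^ (q+1) = 1 := hyμ
    exact WuLiAux.inj_core hqc h5 frob frobs hx' hy' hxy
  exact ((Set.toFinite μ).injOn_iff_bijOn_of_mapsTo hmaps).mp hinj
end

section
/- Let q = 5^k with k even and μ_{q+1} = {x ∈ F_{q^2} : x^{q+1} = 1}. If a, b ∈ μ_{q+1} satisfy (a^5 - 2a)/(a^4 + 2) = (b^5 - 2b)/(b^4 + 2), then (a - b)·(a^4 b^4 + 2(a-b)^4 + 2ab(a-b)^2 - 4a^2 b^2 - 4) = 0. -/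
lemma mod16_aux (k : ℕ) (hk : Even k) : (5 ^ k + 1) % 16 = 2 ∨ (5 ^ k + 1) % 16 = 10 := by
  obtain ⟨m, rfl⟩ := hk
  have h1 : 5 ^ (m + m) % 16 = 9 ^ m % 16 := by
    rw [← two_mul, pow_mul, Nat.pow_mod]
    norm_num
  have h2 : 9 ^ m % 16 = 9 ^ (m % 2) % 16 := by
    conv_lhs => rw [← Nat.div_add_mod m 2, pow_add, pow_mul, Nat.mul_mod, Nat.pow_mod]
    norm_num [Nat.pow_mod]
  rcases Nat.mod_two_eq_zero_or_one m with hm | hm <;> rw [hm] at h2 <;>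
    norm_num at h2 <;> [left; right] <;> omega

lemma denom_ne (k : ℕ) (hk : Even k) {E : Type*} [Field E] (h5 : (5 : E) = 0)
    (a : E) (ha : a ^ (5 ^ k + 1) = 1) : a ^ 4 + 2 ≠ 0 := by
  intro hzero
  have h2ne : (2 : E) ≠ 0 := by
    intro h2
    have : (1 : E) = 0 := by linear_combination h5 - 2 * h2
    exact one_ne_zero this
  have ha4 : a ^ 4 = -2 := by linear_combination hzero
  have ha8 : a ^ 8 = -1 := by
    have : a ^ 8 = (a ^ 4) ^ 2 := by ring
    rw [this, ha4]
    linear_combination h5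
  have ha16 : a ^ 16 = 1 := by
    have : a ^ 16 = (a ^ 8) ^ 2 := by ring
    rw [this, ha8]; ring
  set n := 5 ^ k + 1 with hn
  have key : a ^ (n % 16) = 1 := by
    have hdecomp : a ^ n = (a ^ 16) ^ (n / 16) * a ^ (n % 16) := by
      rw [← pow_mul, ← pow_add, Nat.div_add_mod]
    rw [ha, ha16, one_pow, one_mul] at hdecomp
    exact hdecomp.symm
  have ha2 : a ^ 2 = 1 ∨ a ^ 2 = -1 := by
    rcases mod16_aux k hk with hm | hm <;> rw [hm] at key
    · exact Or.inl key
    · right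
      have h10 : a ^ 10 = a ^ 8 * a ^ 2 := by ring
      rw [key, ha8] at h10
      linear_combination h10
  have ha8' : a ^ 8 = 1 := by
    have : a ^ 8 = (a ^ 2) ^ 4 := by ring
    rcases ha2 with h | h <;> rw [this, h] <;> ring
  rw [ha8'] at ha8
  exact h2ne (by linear_combination ha8)

theorem cross_multiply_identity (k : ℕ) (hk : Even k) (hk0 : 0 < k)
    (E : Type*) [Field E] [Fintype E] (hE : Fintype.card E = (5 ^ k) ^ 2)
    (a b : E) (ha : a ^ (5 ^ k + 1) = 1) (hb : b ^ (5 ^ k + 1) = 1)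
    (h : (a ^ 5 - 2 * a) / (a ^ 4 + 2) = (b ^ 5 - 2 * b) / (b ^ 4 + 2)) :
    (a - b) * (a ^ 4 * b ^ 4 + 2 * (a - b) ^ 4 + 2 * (a * b) * (a - b) ^ 2
      - 4 * a ^ 2 * b ^ 2 - 4) = 0 := by
  -- characteristic is 5
  obtain ⟨n, hp, hc⟩ := FiniteField.card E (ringChar E)
  have hchar : ringChar E = 5 := by
    have hpow : ringChar E ^ (n : ℕ) = 5 ^ (2 * k) := by
      rw [← hc, hE]; ring
    have hdvd : ringChar E ∣ 5 ^ (2 * k) := hpow ▸ dvd_pow_self _ n.ne_zero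
    have h5d : ringChar E ∣ 5 := hp.dvd_of_dvd_pow hdvd
    exact (Nat.prime_dvd_prime_iff_eq hp (by norm_num)).mp h5d
  have h5 : (5 : E) = 0 := by
    have := CharP.cast_eq_zero E (ringChar E)
    rw [hchar] at this
    exact_mod_cast this
  have hda : a ^ 4 + 2 ≠ 0 := denom_ne k hk h5 a ha
  have hdb : b ^ 4 + 2 ≠ 0 := denom_ne k hk h5 b hb
  rw [div_eq_div_iff hda hdb] at h
  linear_combination h + ((2 : E) * a * b ^ 4 - 2 * a ^ 2 * b ^ 3 + 2 * a ^ 3 * b ^ 2 - 2 * a ^ 4 * b) * h5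
end

section
/- The polynomial f(x) = x·((x^2 - x + 2)/(x^2 + x + 2))^2 defines a permutation of F_{5^k} for every odd positive integer k. (Here x^2 + x + 2 has no root in F_{5^k} when k is odd, so f is well-defined; it is the reduction of a polynomial map.) -/
/-!
Over a field of characteristic 5, clearing denominators in `f x = f y` gives
`(x - y) * (a ^ 2 - a * b + 2 * b ^ 2) = 0`, where `a` and `b` are polynomials in `s = x + y`
and `p = x * y`. When `3` is not a square the binary form `a ^ 2 - a * b + 2 * b ^ 2`
(discriminant `-7 = 3`) is anisotropic, so `x ≠ y` forces `a = b = 0`. Since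
`b = (s + 1) * (3 * p + 4 * s)`, either `s = -1` or `p = 2 * s`, and in both cases the equation
`a = 0` makes `x` a root of a quadratic whose discriminant is `2` or `3`. In `𝔽_{5^k}` with `k` odd
we have `5 ^ k ≡ 5 [MOD 8]`, so `2` is not a square while `-1` is, hence `3 = -2` is not a square.
-/

lemma five_pow_mod_eight_of_odd {k : ℕ} (hk : Odd k) : 5 ^ k % 8 = 5 := by
  obtain ⟨j, rfl⟩ := hk
  rw [pow_succ, pow_mul, Nat.mul_mod, Nat.pow_mod]
  norm_num

section CharFive

variable {F : Type*} [Field F] [CharP F 5]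

lemma not_isSquare_three_of_charP_five (hi : IsSquare (-1 : F)) (h2 : ¬IsSquare (2 : F)) :
    ¬IsSquare (3 : F) := by
  intro h3
  have h5 : (5 : F) = 0 := CharP.ofNat_eq_zero F 5
  have h23 : (2 : F) = -1 * 3 := by linear_combination h5
  exact h2 (h23 ▸ hi.mul h3)

lemma sq_add_add_two_ne_zero (h3 : ¬IsSquare (3 : F)) (x : F) : x ^ 2 + x + 2 ≠ 0 := by
  intro hx
  have h5 : (5 : F) = 0 := CharP.ofNat_eq_zero F 5
  exact h3 ⟨2 * x + 1, by linear_combination -4 * hx + 2 * h5⟩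

lemma sq_add_add_one_ne_zero (h2 : ¬IsSquare (2 : F)) (x : F) : x ^ 2 + x + 1 ≠ 0 := by
  intro hx
  have h5 : (5 : F) = 0 := CharP.ofNat_eq_zero F 5
  exact h2 ⟨2 * x + 1, by linear_combination -4 * hx + h5⟩

lemma eq_zero_and_eq_zero_of_sq_sub_mul_add_two_mul_sq_eq_zero (h3 : ¬IsSquare (3 : F))
    {a b : F} (h : a ^ 2 - a * b + 2 * b ^ 2 = 0) : a = 0 ∧ b = 0 := by
  have h5 : (5 : F) = 0 := CharP.ofNat_eq_zero F 5
  have hb : b = 0 := by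
    by_contra hb
    have hsq : (2 * a - b) ^ 2 = 3 * b ^ 2 := by linear_combination 4 * h - 2 * b ^ 2 * h5
    refine h3 ⟨(2 * a - b) / b, ?_⟩
    field_simp
    linear_combination -hsq
  subst hb
  exact ⟨pow_eq_zero_iff two_ne_zero |>.mp (by linear_combination h), rfl⟩

lemma sq_sub_mul_add_ne_zero (h2 : ¬IsSquare (2 : F)) (h3 : ¬IsSquare (3 : F)) {s p : F}
    (ha : p ^ 2 + 3 * s ^ 2 + 2 * p + 4 = 0) (hb : (s + 1) * (3 * p + 4 * s) = 0) (x : F) :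
    x ^ 2 - s * x + p ≠ 0 := by
  intro hx
  have h5 : (5 : F) = 0 := CharP.ofNat_eq_zero F 5
  rcases mul_eq_zero.mp hb with hs | hp
  · obtain rfl : s = -1 := by linear_combination hs
    obtain rfl : p = -x ^ 2 - x := by linear_combination hx
    have hprod : (x ^ 2 + x + 1) * (x ^ 2 + x + 2) = 0 := by
      linear_combination ha + (x ^ 2 + x - 1) * h5
    rcases mul_eq_zero.mp hprod with h | h
    · exact sq_add_add_one_ne_zero h2 x h
    · exact sq_add_add_two_ne_zero h3 x h
  · obtain rfl : p = 2 * s := by linear_combination 2 * hp - (p + 2 * s) * h5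
    have hs : s ^ 2 + 2 * s + 2 = 0 := by linear_combination 3 * ha - (4 * s ^ 2 + 2 * s + 2) * h5
    exact h3 ⟨2 * x - s, by linear_combination -4 * hx - hs + (1 + 2 * s) * h5⟩

lemma cross_mul_sub_eq_mul (x y : F) :
    x * (x ^ 2 - x + 2) ^ 2 * (y ^ 2 + y + 2) ^ 2 - y * (y ^ 2 - y + 2) ^ 2 * (x ^ 2 + x + 2) ^ 2
      = (x - y) * (((x * y) ^ 2 + 3 * (x + y) ^ 2 + 2 * (x * y) + 4) ^ 2
          - ((x * y) ^ 2 + 3 * (x + y) ^ 2 + 2 * (x * y) + 4)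
            * ((x + y + 1) * (3 * (x * y) + 4 * (x + y)))
          + 2 * ((x + y + 1) * (3 * (x * y) + 4 * (x + y))) ^ 2) := by
  rw [← sub_eq_zero]
  ring_nf
  reduce_mod_char!

theorem injective_mul_sq_div_of_charP_five (h2 : ¬IsSquare (2 : F)) (h3 : ¬IsSquare (3 : F)) :
    Function.Injective (fun x : F => x * ((x ^ 2 - x + 2) / (x ^ 2 + x + 2)) ^ 2) := by
  intro x y (hxy : x * _ = y * _)
  by_contra hne
  have hx := sq_add_add_two_ne_zero h3 x
  have hy := sq_add_add_two_ne_zero h3 y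
  have hcross : x * (x ^ 2 - x + 2) ^ 2 * (y ^ 2 + y + 2) ^ 2
      - y * (y ^ 2 - y + 2) ^ 2 * (x ^ 2 + x + 2) ^ 2 = 0 := by
    rw [div_pow, div_pow, mul_div_assoc', mul_div_assoc',
      div_eq_div_iff (pow_ne_zero 2 hx) (pow_ne_zero 2 hy)] at hxy
    exact sub_eq_zero.mpr hxy
  rw [cross_mul_sub_eq_mul] at hcross
  obtain ⟨ha, hb⟩ := eq_zero_and_eq_zero_of_sq_sub_mul_add_two_mul_sq_eq_zero h3
    ((mul_eq_zero.mp hcross).resolve_left (sub_ne_zero.mpr hne))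
  exact sq_sub_mul_add_ne_zero h2 h3 ha hb x (by ring)

end CharFive

theorem conjecture_one (k : ℕ) (hk : Odd k)
    (F : Type*) [Field F] [Fintype F] (hF : Fintype.card F = 5 ^ k) :
    Function.Bijective (fun x : F => x * ((x ^ 2 - x + 2) / (x ^ 2 + x + 2)) ^ 2) := by
  have : Fact (Nat.Prime 5) := ⟨by norm_num⟩
  have : CharP F 5 := charP_of_card_eq_prime_pow hF
  have hcard : Fintype.card F % 8 = 5 := hF ▸ five_pow_mod_eight_of_odd hk
  have h2 : ¬IsSquare (2 : F) := by
    rw [FiniteField.isSquare_two_iff]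
    omega
  have hi : IsSquare (-1 : F) := FiniteField.isSquare_neg_one_iff.mpr (by omega)
  have h3 := not_isSquare_three_of_charP_five hi h2
  exact (injective_mul_sq_div_of_charP_five h2 h3).bijective_of_finite
end

section
/- Let k be odd and q = 5^k. The map f(x) = x·((x^2 - x + 2)/(x^2 + x + 2))^2 maps the set of nonzero squares Ω₁ = {x^2 : x ∈ F_q^*} into itself, and maps the set of non-squares Ω₂ = {2x^2 : x ∈ F_q^*} into itself. -/
lemma aux_ringChar5 (k : ℕ) (hk : 0 < k) (F : Type*) [Field F] [Fintype F]
    (hF : Fintype.card F = 5 ^ k) : ringChar F = 5 := by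
  obtain ⟨n, hp, hcard⟩ := FiniteField.card F (ringChar F)
  have h5 : (ringChar F) ∣ 5 := by
    have : (ringChar F) ∣ 5 ^ k := by
      rw [← hF, hcard]
      exact dvd_pow_self _ (by positivity)
    exact hp.dvd_of_dvd_pow this
  have := Nat.le_of_dvd (by norm_num) h5
  interval_cases h : (ringChar F) <;> revert h5 hp <;> decide

lemma aux_three_not_sq (k : ℕ) (hk : Odd k) (F : Type*) [Field F] [Fintype F]
    (hF : Fintype.card F = 5 ^ k) : ¬ IsSquare (3 : F) := by
  have hkpos : 0 < k := hk.pos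
  have hchar : ringChar F = 5 := aux_ringChar5 k hkpos F hF
  haveI : CharP F 5 := hchar ▸ ringChar.charP F
  have hcast : ∀ n : ℕ, ((n : F) = 0 ↔ 5 ∣ n) := fun n => CharP.cast_eq_zero_iff F 5 n
  have h3 : (3 : F) ≠ 0 := by
    intro h
    have := (hcast 3).mp (by exact_mod_cast h)
    omega
  rw [FiniteField.isSquare_iff (by rw [hchar]; norm_num) h3]
  obtain ⟨m, rfl⟩ := hk
  have h25 : 25 ^ m % 8 = 1 := by
    rw [Nat.pow_mod]; simp
  obtain ⟨a, ha⟩ : ∃ a, 25 ^ m = 8 * a + 1 := ⟨25 ^ m / 8, by omega⟩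
  have hcard2 : Fintype.card F / 2 = 2 * (10 * a + 1) := by
    rw [hF]
    have : (5:ℕ) ^ (2 * m + 1) = 5 * 25 ^ m := by
      rw [pow_succ, pow_mul]; ring
    rw [this, ha]; omega
  rw [hcard2, pow_mul]
  have h9 : (3 : F) ^ 2 = -1 := by
    have : ((10 : ℕ) : F) = 0 := (hcast 10).mpr (by norm_num)
    push_cast at this
    linear_combination this
  rw [h9, Odd.neg_one_pow ⟨5 * a, by ring⟩]
  intro h
  have : ((2 : ℕ) : F) = 0 := by push_cast; linear_combination -h
  have := (hcast 2).mp this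
  omega

lemma aux_no_root (k : ℕ) (hk : Odd k) (F : Type*) [Field F] [Fintype F]
    (hF : Fintype.card F = 5 ^ k) (y : F) : y ^ 2 + y + 2 ≠ 0 := by
  haveI : CharP F 5 := (aux_ringChar5 k hk.pos F hF) ▸ ringChar.charP F
  have h10 : ((10 : ℕ) : F) = 0 := (CharP.cast_eq_zero_iff F 5 10).mpr (by norm_num)
  push_cast at h10
  intro h
  exact aux_three_not_sq k hk F hF ⟨2 * y + 1, by linear_combination -4 * h + h10⟩

theorem f_maps_omegas (k : ℕ) (hk : Odd k)
    (F : Type*) [Field F] [Fintype F] (hF : Fintype.card F = 5 ^ k) :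
    let f : F → F := fun x => x * ((x ^ 2 - x + 2) / (x ^ 2 + x + 2)) ^ 2
    let Ω₁ : Set F := {y | ∃ x : F, x ≠ 0 ∧ y = x ^ 2}
    let Ω₂ : Set F := {y | ∃ x : F, x ≠ 0 ∧ y = 2 * x ^ 2}
    (∀ x ∈ Ω₁, f x ∈ Ω₁) ∧ (∀ x ∈ Ω₂, f x ∈ Ω₂) := by
  intro f Ω₁ Ω₂
  have nr := aux_no_root k hk F hF
  constructor
  · rintro x ⟨a, ha, rfl⟩
    have hd : (a ^ 2) ^ 2 + a ^ 2 + 2 ≠ 0 := nr (a ^ 2)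
    have hn : (a ^ 2) ^ 2 - a ^ 2 + 2 ≠ 0 := by
      have := nr (-a ^ 2); intro h; apply this; linear_combination h
    refine ⟨a * ((a ^ 2) ^ 2 - a ^ 2 + 2) / ((a ^ 2) ^ 2 + a ^ 2 + 2), ?_, ?_⟩
    · exact div_ne_zero (mul_ne_zero ha hn) hd
    · show (a ^ 2) * (((a ^ 2) ^ 2 - a ^ 2 + 2) / ((a ^ 2) ^ 2 + a ^ 2 + 2)) ^ 2 = _
      field_simp
  · rintro x ⟨a, ha, rfl⟩
    have hd : (2 * a ^ 2) ^ 2 + 2 * a ^ 2 + 2 ≠ 0 := by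
      have := nr (2 * a ^ 2); intro h; apply this; linear_combination h
    have hn : (2 * a ^ 2) ^ 2 - 2 * a ^ 2 + 2 ≠ 0 := by
      have := nr (-(2 * a ^ 2)); intro h; apply this; linear_combination h
    refine ⟨a * ((2 * a ^ 2) ^ 2 - 2 * a ^ 2 + 2) / ((2 * a ^ 2) ^ 2 + 2 * a ^ 2 + 2), ?_, ?_⟩
    · exact div_ne_zero (mul_ne_zero ha hn) hd
    · show (2 * a ^ 2) * (((2 * a ^ 2) ^ 2 - 2 * a ^ 2 + 2) / ((2 * a ^ 2) ^ 2 + 2 * a ^ 2 + 2)) ^ 2 = _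
      field_simp
end

section
/- Let k be odd and q = 5^k. If a, b ∈ F_q^* with a ≠ ±b and (a^5 - a^3 + 2a)/(a^4 + a^2 + 2) = (b^5 - b^3 + 2b)/(b^4 + b^2 + 2), then setting c = ab and z = (a-b)^2, z satisfies z^2 - (2c^2 + c + 1)z - 2c^4 + 2c^3 - c^2 + c + 2 = 0. -/
lemma char_five (k : ℕ) (F : Type*) [Field F] [Fintype F]
    (hF : Fintype.card F = 5 ^ k) (hk : k ≠ 0) : CharP F 5 := by
  obtain ⟨p, hc⟩ := CharP.exists F
  haveI := hc
  obtain ⟨n, hp, hcard⟩ := FiniteField.card F p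
  have hdvd : p ∣ 5 ^ k := by
    rw [← hF, hcard]
    exact dvd_pow_self p n.2.ne'
  have hp5 : p = 5 := by
    have := hp.dvd_of_dvd_pow hdvd
    exact (Nat.prime_dvd_prime_iff_eq hp (by norm_num)).mp this
  rwa [hp5] at hc

lemma no_root_quadratic (k : ℕ) (hk : Odd k)
    (F : Type*) [Field F] [Fintype F] (hF : Fintype.card F = 5 ^ k)
    (t : F) : t ^ 2 + t + 2 ≠ 0 := by
  haveI hchar : CharP F 5 := char_five k F hF (by rintro rfl; simp [Nat.odd_iff] at hk)
  have h5 : (5 : F) = 0 := by exact_mod_cast CharP.cast_eq_zero F 5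
  intro hroot
  set s : F := 2 * t + 1 with hs
  have hs2 : s ^ 2 = 3 := by rw [hs]; linear_combination 4 * hroot - 2 * h5
  have h3 : (3 : F) ≠ 0 := by
    intro h0
    exact one_ne_zero (α := F) (by linear_combination 2 * h0 - h5)
  have hs0 : s ≠ 0 := by
    intro h0
    rw [h0] at hs2
    simp at hs2
    exact h3 hs2.symm
  obtain ⟨m, rfl⟩ := hk
  -- 25^m ≡ 1 mod 8
  have hmod : 25 ^ m % 8 = 1 := by
    rw [Nat.pow_mod]; norm_num
  set T := 25 ^ m / 8 with hT
  have h25 : 25 ^ m = 8 * T + 1 := by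
    rw [hT]; omega
  have hexp : 5 ^ (2 * m + 1) - 1 = 2 * (20 * T + 2) := by
    have : 5 ^ (2 * m + 1) = 5 * 25 ^ m := by
      rw [pow_succ, pow_mul]; ring
    omega
  have hone : s ^ (5 ^ (2 * m + 1) - 1) = 1 := by
    have := FiniteField.pow_card_sub_one_eq_one s hs0
    rwa [hF] at this
  rw [hexp, pow_mul, hs2] at hone
  -- (3 : F) ^ (20T + 2) = -1
  have h34 : (3 : F) ^ 4 = 1 := by linear_combination 16 * h5
  have hval : (3 : F) ^ (20 * T + 2) = -1 := by
    have : (20 : ℕ) * T + 2 = 4 * (5 * T) + 2 := by ring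
    rw [this, pow_add, pow_mul, h34, one_pow, one_mul]
    linear_combination 2 * h5
  rw [hval] at hone
  have h2 : (2 : F) = 0 := by linear_combination -hone
  exact one_ne_zero (α := F) (by linear_combination h5 - 2 * h2)

theorem z_satisfies_quadratic (k : ℕ) (hk : Odd k)
    (F : Type*) [Field F] [Fintype F] (hF : Fintype.card F = 5 ^ k)
    (a b : F) (ha : a ≠ 0) (hb : b ≠ 0) (hab : a ≠ b) (hab' : a ≠ -b)
    (h : (a ^ 5 - a ^ 3 + 2 * a) / (a ^ 4 + a ^ 2 + 2)
        = (b ^ 5 - b ^ 3 + 2 * b) / (b ^ 4 + b ^ 2 + 2)) :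
    let c := a * b
    let z := (a - b) ^ 2
    z ^ 2 - (2 * c ^ 2 + c + 1) * z - 2 * c ^ 4 + 2 * c ^ 3 - c ^ 2 + c + 2 = 0 := by
  intro c z
  haveI hchar : CharP F 5 := char_five k F hF (by rintro rfl; simp [Nat.odd_iff] at hk)
  have h5 : (5 : F) = 0 := by exact_mod_cast CharP.cast_eq_zero F 5
  have hda : a ^ 4 + a ^ 2 + 2 ≠ 0 := by
    intro h0
    exact no_root_quadratic k hk F hF (a ^ 2) (by linear_combination h0)
  have hdb : b ^ 4 + b ^ 2 + 2 ≠ 0 := by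
    intro h0
    exact no_root_quadratic k hk F hF (b ^ 2) (by linear_combination h0)
  have hcross : (a ^ 5 - a ^ 3 + 2 * a) * (b ^ 4 + b ^ 2 + 2)
      = (b ^ 5 - b ^ 3 + 2 * b) * (a ^ 4 + a ^ 2 + 2) :=
    (div_eq_div_iff hda hdb).mp h
  have key : (a - b) * (2 * (((a - b) ^ 2) ^ 2
      - (2 * (a * b) ^ 2 + a * b + 1) * ((a - b) ^ 2)
      - 2 * (a * b) ^ 4 + 2 * (a * b) ^ 3 - (a * b) ^ 2 + a * b + 2)) = 0 := by
    linear_combination hcross - (2*a*b^2 - 2*a*b^4 - 2*a^2*b + 5*a^2*b^3 - a^2*b^5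
      - 5*a^3*b^2 + 3*a^3*b^4 + 2*a^4*b - 3*a^4*b^3 - a^4*b^5 + a^5*b^2 + a^5*b^4) * h5
  have hab0 : a - b ≠ 0 := sub_ne_zero.mpr hab
  have h2 : (2 : F) ≠ 0 := by
    intro h0
    exact one_ne_zero (α := F) (by linear_combination h5 - 2 * h0)
  rcases mul_eq_zero.mp key with h' | h'
  · exact absurd h' hab0
  rcases mul_eq_zero.mp h' with h'' | h''
  · exact absurd h'' h2
  exact h''
end

section
/- Let q = 3^r with r ≥ 2, and let γ ∈ F_{q^2} satisfy (γ - 1)^{(q-1)/2} = γ^{(q-1)/2} with γ ≠ 0, 1. Then γ ∈ F_q. -/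
theorem gamma_in_Fq (r : ℕ) (hr : 2 ≤ r)
    (E : Type*) [Field E] [Fintype E] (hE : Fintype.card E = (3 ^ r) ^ 2)
    (γ : E) (hγ0 : γ ≠ 0) (hγ1 : γ ≠ 1)
    (h : (γ - 1) ^ ((3 ^ r - 1) / 2) = γ ^ ((3 ^ r - 1) / 2)) :
    γ ^ (3 ^ r) = γ := by
  have h3 : Nat.Prime 3 := by norm_num
  obtain ⟨p, hp⟩ := CharP.exists E
  have hpp : p.Prime := CharP.char_is_prime E p
  obtain ⟨n, hn, hcard⟩ := FiniteField.card E p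
  have hp3 : p = 3 := by
    have hdvd : p ∣ (3 ^ r) ^ 2 := by
      rw [← hE, hcard]; exact dvd_pow_self p n.pos.ne'
    have : p ∣ 3 ^ r := hpp.dvd_of_dvd_pow hdvd
    exact (Nat.prime_dvd_prime_iff_eq hpp h3).mp (hpp.dvd_of_dvd_pow this)
  subst hp3
  haveI : CharP E 3 := hp
  haveI : Fact (Nat.Prime 3) := ⟨h3⟩
  have hq1 : 1 ≤ 3 ^ r := Nat.one_le_pow _ _ (by norm_num)
  have heven : 2 ∣ 3 ^ r - 1 := by
    have : 3 ^ r % 2 = 1 := Nat.odd_iff.mp (Odd.pow ⟨1, rfl⟩)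
    omega
  have hhalf : (3 ^ r - 1) / 2 * 2 = 3 ^ r - 1 := Nat.div_mul_cancel heven
  have h2 : (γ - 1) ^ (3 ^ r - 1) = γ ^ (3 ^ r - 1) := by
    rw [← hhalf, pow_mul, pow_mul, h]
  have hfrob : (γ - 1) ^ (3 ^ r) = γ ^ (3 ^ r) - 1 := by
    have := sub_pow_char_pow (R := E) (p := 3) (n := r) γ 1
    simpa using this
  have hm : 3 ^ r = (3 ^ r - 1) + 1 := by omega
  have key : (γ ^ (3 ^ r) - 1) * γ = (γ - 1) * γ ^ (3 ^ r) := by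
    calc (γ ^ (3 ^ r) - 1) * γ = (γ - 1) ^ (3 ^ r) * γ := by rw [hfrob]
      _ = (γ - 1) * γ ^ (3 ^ r) := by
          rw [hm]; simp only [pow_succ']; rw [h2]; ring
  linear_combination key
end

section
/- Let q = 3^r with r ≥ 2, n = 2, k = 3^{2r-1} + 3^r - 3^{r-1}, and let γ ∈ F_{q^2} satisfy (γ - 1)^{(q-1)/2} = γ^{(q-1)/2}. Then f(x) = x + γ·(x^k + x^{kq}) is a permutation of F_{q^2}. -/
/-!
Squaring the hypothesis on `γ` and applying Frobenius gives `γ ^ q = γ`, so `f x = f y` forces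
`c := x - y` into `𝔽_q`. In characteristic `3`, and since `3k ≡ 1 + 2q (mod q² - 1)`,
`f x ^ 3 = x ^ 3 + γ ^ 3 · x · x^q · (x + x^q)`; comparing the cubes of `f (y + c)` and `f y`
yields `c = 0` or `(γ - 1)³ c² = γ³ u²` with `u = y - y^q`, so that `u^q = -u`. In the second case,
if `c ≠ 0`, raising to the power `(q - 1)/2` makes the left side `(γ^((q-1)/2))³` and the right
side its negative, forcing `γ = 0`, which is absurd.
-/

section Field

variable {K : Type*} [Field K]

theorem pow_eq_of_pow_succ_eq_mul {x a : K} {n : ℕ} (hx : x ≠ 0) (h : x ^ (n + 1) = a * x) :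
    x ^ n = a :=
  mul_right_cancel₀ hx (by rw [← pow_succ, h])

theorem pow_eq_self_of_sub_one_pow_eq_pow {p r : ℕ} [ExpChar K p] (hq : Odd (p ^ r)) {γ : K}
    (h : (γ - 1) ^ ((p ^ r - 1) / 2) = γ ^ ((p ^ r - 1) / 2)) : γ ^ p ^ r = γ := by
  obtain ⟨M, hM⟩ := hq
  rw [show (p ^ r - 1) / 2 = M by omega] at h
  have hfrob : (γ - 1) ^ p ^ r = γ ^ p ^ r - 1 := by rw [sub_pow_expChar_pow, one_pow]
  rw [hM, pow_succ, pow_succ, pow_mul', h, ← pow_mul'] at hfrob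
  have hγM : γ ^ (2 * M) = 1 := by linear_combination -hfrob
  rw [hM, pow_succ, hγM, one_mul]

theorem eq_zero_of_sub_one_cube_mul_sq_eq (h2 : (2 : K) ≠ 0) {q : ℕ} (hq : Odd q) (hq1 : q ≠ 1)
    {γ c u : K} (hγ : (γ - 1) ^ ((q - 1) / 2) = γ ^ ((q - 1) / 2)) (hc : c ^ q = c)
    (hu : u ^ q = -u) (heq : (γ - 1) ^ 3 * c ^ 2 = γ ^ 3 * u ^ 2) : c = 0 := by
  obtain ⟨M, rfl⟩ := hq
  have hM : M ≠ 0 := by omega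
  rw [show (2 * M + 1 - 1) / 2 = M by omega] at hγ
  by_contra hc0
  have hc2M : c ^ (2 * M) = 1 := pow_eq_of_pow_succ_eq_mul hc0 (by rw [hc, one_mul])
  rcases eq_or_ne u 0 with rfl | hu0
  · have hγ1 : γ - 1 = 0 := by simpa [hc0] using heq
    rw [hγ1, sub_eq_zero.mp hγ1, zero_pow hM, one_pow] at hγ
    exact zero_ne_one hγ
  have hu2M : u ^ (2 * M) = -1 := pow_eq_of_pow_succ_eq_mul hu0 (by rw [hu, neg_one_mul])
  have hlhs : ((γ - 1) ^ 3 * c ^ 2) ^ M = (γ ^ M) ^ 3 := by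
    rw [mul_pow, ← pow_mul, ← pow_mul, hc2M, mul_one, mul_comm, pow_mul, hγ]
  have hrhs : (γ ^ 3 * u ^ 2) ^ M = -(γ ^ M) ^ 3 := by
    rw [mul_pow, ← pow_mul, ← pow_mul, hu2M, mul_neg_one, mul_comm, pow_mul]
  have hpow : ((γ - 1) ^ 3 * c ^ 2) ^ M = (γ ^ 3 * u ^ 2) ^ M := by rw [heq]
  have hγM : 2 * (γ ^ M) ^ 3 = 0 := by linear_combination hrhs - hlhs + hpow
  have hγ0 : γ = 0 :=
    (pow_eq_zero_iff hM).mp <| (pow_eq_zero_iff three_ne_zero).mp <|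
      (mul_eq_zero.mp hγM).resolve_left h2
  exact hc0 (by simpa [hγ0] using heq)

end Field

section FiniteField

variable {K : Type*} [Field K] [Fintype K]

theorem pow_pow_eq_self_of_card_eq_sq {q : ℕ} (hK : Fintype.card K = q ^ 2) (x : K) :
    (x ^ q) ^ q = x := by
  rw [← pow_mul, ← sq, ← hK, FiniteField.pow_card]

theorem pow_cube_of_three_mul_eq {q k : ℕ} (hK : Fintype.card K = q ^ 2)
    (hk : 3 * k = q ^ 2 + 2 * q) (x : K) : (x ^ k) ^ 3 = x * (x ^ q) ^ 2 := by
  rw [← pow_mul, mul_comm, hk, pow_add, ← hK, FiniteField.pow_card, pow_mul']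

variable {p r : ℕ} [ExpChar K p] (hK : Fintype.card K = (p ^ r) ^ 2)
include hK

theorem add_pow_pow_eq_self_of_card_eq_sq (x : K) : (x + x ^ p ^ r) ^ p ^ r = x + x ^ p ^ r := by
  rw [add_pow_expChar_pow, pow_pow_eq_self_of_card_eq_sq hK, add_comm]

theorem sub_pow_pow_eq_neg_of_card_eq_sq (y : K) :
    (y - y ^ p ^ r) ^ p ^ r = -(y - y ^ p ^ r) := by
  rw [sub_pow_expChar_pow, pow_pow_eq_self_of_card_eq_sq hK, neg_sub]

theorem sub_pow_eq_sub_of_add_mul_trace_eq {γ : K} (hγ : γ ^ p ^ r = γ) (k : ℕ) {x y : K}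
    (hxy : x + γ * (x ^ k + (x ^ k) ^ p ^ r) = y + γ * (y ^ k + (y ^ k) ^ p ^ r)) :
    (x - y) ^ p ^ r = x - y := by
  have hsub : x - y = γ * ((y ^ k + (y ^ k) ^ p ^ r) - (x ^ k + (x ^ k) ^ p ^ r)) := by
    linear_combination hxy
  rw [hsub, mul_pow, sub_pow_expChar_pow, hγ, add_pow_pow_eq_self_of_card_eq_sq hK,
    add_pow_pow_eq_self_of_card_eq_sq hK]

end FiniteField

theorem three_mul_exponent {r : ℕ} (hr : 0 < r) :
    3 * (3 ^ (2 * r - 1) + 3 ^ r - 3 ^ (r - 1)) = (3 ^ r) ^ 2 + 2 * 3 ^ r := by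
  have h2r : 3 * 3 ^ (2 * r - 1) = (3 ^ r) ^ 2 := by rw [← pow_succ', ← pow_mul]; congr 1; omega
  have hr' : 3 * 3 ^ (r - 1) = 3 ^ r := by rw [← pow_succ']; congr 1; omega
  omega

/-- With `Y = y ^ q` and `c ^ q = c`, the left side is `f (y + c) ^ 3`. -/
theorem add_cube_norm_trace_add {R : Type*} [CommRing R] [CharP R 3] (y Y c γ : R) :
    (y + c) ^ 3 + γ ^ 3 * ((y + c) * (Y + c) ^ 2 + (Y + c) * (y + c) ^ 2)
      = y ^ 3 + γ ^ 3 * (y * Y ^ 2 + Y * y ^ 2)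
        - c * ((γ - 1) ^ 3 * c ^ 2 - γ ^ 3 * (y - Y) ^ 2) := by
  have h3 : (3 : R) = 0 := by exact_mod_cast CharP.cast_eq_zero R 3
  linear_combination (y ^ 2 * c + y * c ^ 2 + 2 * γ ^ 3 * c * y * Y + γ ^ 3 * c ^ 2 * (y + Y)
    + γ ^ 3 * c ^ 3 - γ ^ 2 * c ^ 3 + γ * c ^ 3) * h3

section CharThree

variable {K : Type*} [Field K] [Fintype K] [CharP K 3] {r : ℕ}
  (hK : Fintype.card K = (3 ^ r) ^ 2)
include hK

theorem add_mul_trace_cube {k : ℕ} (hk : 3 * k = (3 ^ r) ^ 2 + 2 * 3 ^ r) (γ x : K) :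
    (x + γ * (x ^ k + (x ^ k) ^ 3 ^ r)) ^ 3
      = x ^ 3 + γ ^ 3 * (x * (x ^ 3 ^ r) ^ 2 + x ^ 3 ^ r * x ^ 2) := by
  rw [add_pow_char, mul_pow, add_pow_char, pow_right_comm _ (3 ^ r) 3,
    pow_cube_of_three_mul_eq hK hk, mul_pow, pow_right_comm (x ^ 3 ^ r) 2,
    pow_pow_eq_self_of_card_eq_sq hK]

end CharThree

theorem trace_pp (r : ℕ) (hr : 2 ≤ r)
    (E : Type*) [Field E] [Fintype E] (hE : Fintype.card E = (3 ^ r) ^ 2)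
    (γ : E) (h : (γ - 1) ^ ((3 ^ r - 1) / 2) = γ ^ ((3 ^ r - 1) / 2)) :
    let k := 3 ^ (2 * r - 1) + 3 ^ r - 3 ^ (r - 1)
    Function.Bijective (fun x : E => x + γ * (x ^ k + (x ^ k) ^ (3 ^ r))) := by
  intro k
  have : Fact (Nat.Prime 3) := ⟨Nat.prime_three⟩
  have : CharP E 3 := charP_of_card_eq_prime_pow (f := r * 2) (by rw [hE, pow_mul])
  have hodd : Odd (3 ^ r) := Odd.pow (by decide)
  have hγ : γ ^ 3 ^ r = γ := pow_eq_self_of_sub_one_pow_eq_pow hodd h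
  rw [← Finite.injective_iff_bijective]
  intro x y hxy
  have hc := sub_pow_eq_sub_of_add_mul_trace_eq hE hγ k hxy
  obtain ⟨c, rfl⟩ : ∃ c, x = y + c := ⟨x - y, by ring⟩
  rw [add_sub_cancel_left] at hc
  have hk : 3 * k = (3 ^ r) ^ 2 + 2 * 3 ^ r := three_mul_exponent (by omega)
  have hcube := congrArg (· ^ 3) hxy
  simp only [add_mul_trace_cube hE hk] at hcube
  rw [add_pow_char_pow, hc, add_cube_norm_trace_add] at hcube
  rcases mul_eq_zero.mp (sub_eq_self.mp hcube) with hc0 | hquad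
  · rw [hc0, add_zero]
  · have h2 : (2 : E) ≠ 0 := Ring.two_ne_zero (by rw [ringChar.eq E 3]; decide)
    have hq1 : 3 ^ r ≠ 1 := (Nat.one_lt_pow (by omega) (by norm_num)).ne'
    rw [eq_zero_of_sub_one_cube_mul_sq_eq h2 hodd hq1 h hc
      (sub_pow_pow_eq_neg_of_card_eq_sq hE y) (sub_eq_zero.mp hquad), add_zero]
end
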